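/- arXiv:1209.3098 — 2 statements merged into one kernel-verified Lean document; each statement's English description precedes it below -/
import Mathlib

section
/- For every function f from ℤ₊^d to ℝ and every x, a in ℤ₊^d, one has f(x) = f(a) + Σ_{i=1}^d Δ_i f(a)(x⁽ⁱ⁾ - a⁽ⁱ⁾) + R, where Δ_i f denotes the forward difference of f in the i-th coordinate, and the residual R satisfies |R| ≤ (1/2)·max_{i,j} ‖Δ²_{ij} f‖_∞ · ( Σ_{i=1}^d |x⁽ⁱ⁾ - a⁽ⁱ⁾|·|x⁽ⁱ⁾ - a⁽ⁱ⁾ - 1| + Σ_{i≠j} |x⁽ⁱ⁾ - a⁽ⁱ⁾|·|x⁽ʲ⁾ - a⁽ʲ⁾| ). -/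
open Finset

lemma tele (g : ℕ → ℝ) {m n : ℕ} (h : m ≤ n) :
    ∑ k ∈ Ico m n, (g (k+1) - g k) = g n - g m := by
  rw [Finset.sum_Ico_eq_sub _ h, Finset.sum_range_sub, Finset.sum_range_sub]; ring

lemma lip (g : ℕ → ℝ) (C : ℝ) (h : ∀ t, |g (t+1) - g t| ≤ C) (m n : ℕ) :
    |g n - g m| ≤ C * |(n:ℝ) - m| := by
  wlog hmn : m ≤ n with H
  · rw [abs_sub_comm, abs_sub_comm (n:ℝ)]
    exact H g C h n m (le_of_not_ge hmn)
  rw [← tele g hmn]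
  calc |∑ k ∈ Ico m n, (g (k+1) - g k)| ≤ ∑ k ∈ Ico m n, |g (k+1) - g k| :=
        Finset.abs_sum_le_sum_abs _ _
    _ ≤ ∑ k ∈ Ico m n, C := Finset.sum_le_sum fun k _ => h k
    _ = (n - m : ℕ) * C := by rw [Finset.sum_const, Nat.card_Ico]; simp [nsmul_eq_mul]
    _ = C * |(n:ℝ) - m| := by
        rw [abs_of_nonneg (by simp [hmn] : (0:ℝ) ≤ (n:ℝ) - m), Nat.cast_sub hmn]; ring

lemma gauss (N : ℕ) : ∑ i ∈ range N, (i:ℝ) = N * (N - 1) / 2 := by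
  induction N with
  | zero => simp
  | succ n ih => rw [Finset.sum_range_succ, ih]; push_cast; ring

lemma oneD (g : ℕ → ℝ) (C : ℝ) (hC : 0 ≤ C)
    (h : ∀ t, |(g (t+1+1) - g (t+1)) - (g (t+1) - g t)| ≤ C) (m n : ℕ) :
    |g n - g m - (g (m+1) - g m) * ((n:ℝ) - m)| ≤
      1/2 * C * (|(n:ℝ) - m| * |(n:ℝ) - m - 1|) := by
  set D : ℕ → ℝ := fun t => g (t+1) - g t with hD
  have hlip : ∀ k, |D k - D m| ≤ C * |(k:ℝ) - m| := fun k => lip D C h m k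
  rcases le_or_gt m n with hmn | hmn
  · set N := n - m with hN
    have hnm : (n:ℝ) - m = N := by rw [hN, Nat.cast_sub hmn]
    have key : g n - g m - D m * ((n:ℝ) - m) = ∑ k ∈ Ico m n, (D k - D m) := by
      rw [Finset.sum_sub_distrib, tele g hmn, Finset.sum_const, Nat.card_Ico, hnm]
      push_cast [nsmul_eq_mul]; ring
    rw [key]
    calc |∑ k ∈ Ico m n, (D k - D m)| ≤ ∑ k ∈ Ico m n, |D k - D m| :=
          Finset.abs_sum_le_sum_abs _ _
      _ ≤ ∑ k ∈ Ico m n, C * |(k:ℝ) - m| := Finset.sum_le_sum fun k _ => hlip k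
      _ = C * ∑ k ∈ Ico m n, |(k:ℝ) - m| := by rw [Finset.mul_sum]
      _ = C * ∑ i ∈ range N, (i:ℝ) := by
          rw [Finset.sum_Ico_eq_sum_range]
          congr 1
          refine Finset.sum_congr rfl fun i _ => ?_
          rw [abs_of_nonneg (by push_cast; linarith : (0:ℝ) ≤ ((m + i : ℕ):ℝ) - m)]
          push_cast; ring
      _ = C * (N * ((N:ℝ) - 1) / 2) := by rw [gauss]
      _ ≤ 1/2 * C * (|(n:ℝ) - m| * |(n:ℝ) - m - 1|) := by
          rw [hnm]
          have h1 : (N:ℝ) * ((N:ℝ) - 1) ≤ |(N:ℝ)| * |(N:ℝ) - 1| := by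
            rw [← abs_mul]; exact le_abs_self _
          nlinarith [abs_nonneg ((N:ℝ)), abs_nonneg ((N:ℝ) - 1)]
  · have hnm : m - (n:ℝ) = ((m - n : ℕ):ℝ) := by rw [Nat.cast_sub hmn.le]
    have key : g n - g m - D m * ((n:ℝ) - m) = -∑ k ∈ Ico n m, (D k - D m) := by
      rw [Finset.sum_sub_distrib, tele g hmn.le, Finset.sum_const, Nat.card_Ico]
      push_cast [nsmul_eq_mul, Nat.cast_sub hmn.le]; ring
    rw [key, abs_neg]
    set N := m - n with hNdef
    calc |∑ k ∈ Ico n m, (D k - D m)| ≤ ∑ k ∈ Ico n m, |D k - D m| :=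
          Finset.abs_sum_le_sum_abs _ _
      _ ≤ ∑ k ∈ Ico n m, C * |(k:ℝ) - m| := Finset.sum_le_sum fun k _ => hlip k
      _ = C * ∑ k ∈ Ico n m, ((m:ℝ) - k) := by
          rw [Finset.mul_sum]
          refine Finset.sum_congr rfl fun k hk => ?_
          have hk' := (Finset.mem_Ico.1 hk).2
          have : |(k:ℝ) - m| = (m:ℝ) - k := by
            rw [abs_sub_comm,
              abs_of_nonneg (sub_nonneg.2 (by exact_mod_cast hk'.le))]
          rw [this]
      _ = C * ∑ i ∈ range N, ((m:ℝ) - (n + i)) := by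
          rw [hNdef, Finset.sum_Ico_eq_sum_range]
          congr 1
          exact Finset.sum_congr rfl fun i _ => by push_cast; ring
      _ = C * ((N:ℝ) * m - N * n - N * ((N:ℝ) - 1) / 2) := by
          rw [Finset.sum_sub_distrib, Finset.sum_const, Finset.sum_add_distrib,
            Finset.sum_const, gauss, Finset.card_range]
          push_cast [nsmul_eq_mul]; ring
      _ ≤ 1/2 * C * (|(n:ℝ) - m| * |(n:ℝ) - m - 1|) := by
          have hN0 : (0:ℝ) ≤ (N:ℝ) := Nat.cast_nonneg N
          have hnm' : (n:ℝ) - m = -(N:ℝ) := by linarith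
          have h1 : |(n:ℝ) - m| = N := by rw [hnm', abs_neg, abs_of_nonneg hN0]
          have h2 : |(n:ℝ) - m - 1| = (N:ℝ) + 1 := by
            rw [hnm', show -(N:ℝ) - 1 = -((N:ℝ)+1) by ring, abs_neg,
              abs_of_nonneg (by linarith)]
          rw [h1, h2]
          apply le_of_eq
          have hm : (m:ℝ) = (n:ℝ) + N := by linarith
          rw [hm]; ring

lemma add_single {d : ℕ} (p : Fin d → ℕ) (k : Fin d) :
    p + Pi.single k 1 = Function.update p k (p k + 1) := by
  funext i
  rcases eq_or_ne i k with rfl | h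
  · simp
  · simp [Function.update_apply, h, Pi.single_apply]

lemma upd_add_single {d : ℕ} (p : Fin d → ℕ) (k : Fin d) (t : ℕ) :
    Function.update p k t + Pi.single k 1 = Function.update p k (t+1) := by
  rw [add_single]
  simp [Function.update_idem]

/-- Multidimensional discrete Taylor formula with second-order remainder on `ℤ₊^d`. -/
theorem discrete_taylor_second_order (d : ℕ) (f : (Fin d → ℕ) → ℝ) (x a : Fin d → ℕ)
    (M : ℝ)
    (hM : ∀ i j : Fin d, ∀ y : Fin d → ℕ,
      |(fun z => f (z + Pi.single j 1) - f z) (y + Pi.single i 1)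
        - (fun z => f (z + Pi.single j 1) - f z) y| ≤ M) :
    |f x - f a - ∑ i : Fin d, (f (a + Pi.single i 1) - f a) * ((x i : ℝ) - (a i : ℝ))|
      ≤ (1 / 2) * M *
        ((∑ i : Fin d, |(x i : ℝ) - (a i : ℝ)| * |(x i : ℝ) - (a i : ℝ) - 1|)
          + ∑ i : Fin d, ∑ j : Fin d,
              if i = j then 0 else |(x i : ℝ) - (a i : ℝ)| * |(x j : ℝ) - (a j : ℝ)|) := by
  rcases Nat.eq_zero_or_pos d with rfl | hd
  · have hxa : x = a := funext fun i => i.elim0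
    subst hxa
    simp
  have hM0 : 0 ≤ M := le_trans (abs_nonneg _) (hM ⟨0, hd⟩ ⟨0, hd⟩ a)
  -- the interpolation path
  set z : ℕ → (Fin d → ℕ) := fun k i => if (i:ℕ) < k then x i else a i with hz
  have hz0 : z 0 = a := funext fun i => by simp [hz]
  have hzd : z d = x := funext fun i => by simp [hz, i.isLt]
  have hzkk : ∀ (n : ℕ) (h : n < d), z n ⟨n, h⟩ = a ⟨n, h⟩ := by
    intro n h; simp [hz]
  have hzs : ∀ (n : ℕ) (h : n < d),
      z (n+1) = Function.update (z n) ⟨n, h⟩ (x ⟨n, h⟩) := by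
    intro n h
    funext i
    rcases eq_or_ne i ⟨n, h⟩ with rfl | hi
    · simp [hz]
    · have hv : (i:ℕ) ≠ n := fun hc => hi (Fin.ext hc)
      simp only [hz, Function.update_apply, if_neg hi]
      have hiff : ((i:ℕ) < n + 1) ↔ ((i:ℕ) < n) := by omega
      simp only [hiff]
  have hupd_a : ∀ k : Fin d, Function.update (z ↑k) k (a k) = z ↑k := by
    intro k
    have h1 : z ↑k k = a k := by simp [hz]
    conv_lhs => rw [← h1]
    exact Function.update_eq_self _ _
  -- diagonal (second difference along one coordinate) estimate
  have estA : ∀ k : Fin d,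
      |f (z (↑k+1)) - f (z ↑k)
          - (f (z ↑k + Pi.single k 1) - f (z ↑k)) * ((x k : ℝ) - a k)|
        ≤ 1/2 * M * (|(x k : ℝ) - a k| * |(x k : ℝ) - a k - 1|) := by
    intro k
    set g : ℕ → ℝ := fun t => f (Function.update (z ↑k) k t) with hg
    have h2 : ∀ t, |(g (t+1+1) - g (t+1)) - (g (t+1) - g t)| ≤ M := by
      intro t
      have h := hM k k (Function.update (z ↑k) k t)
      simp only at h
      rw [upd_add_single, upd_add_single] at h
      simpa only [hg] using h
    have key := oneD g M hM0 h2 (a k) (x k)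
    have e1 : g (x k) = f (z (↑k + 1)) := by
      simp only [hg]
      exact (congrArg f (hzs ↑k k.isLt)).symm
    have e2 : g (a k) = f (z ↑k) := by
      simp only [hg]
      exact congrArg f (hupd_a k)
    have e3 : g (a k + 1) = f (z ↑k + Pi.single k 1) := by
      simp only [hg]
      refine (congrArg f ?_).symm
      rw [add_single, hzkk ↑k k.isLt]
    rw [e1, e3, e2] at key
    exact key
  -- off-diagonal (mixed difference) chain estimate
  have estB : ∀ k : Fin d,
      |(f (z ↑k + Pi.single k 1) - f (z ↑k)) - (f (a + Pi.single k 1) - f a)|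
        ≤ M * ∑ j : Fin d, (if (j:ℕ) < (k:ℕ) then |(x j : ℝ) - a j| else 0) := by
    intro k
    have claim : ∀ n : ℕ, n ≤ d →
        |(f (z n + Pi.single k 1) - f (z n)) - (f (z 0 + Pi.single k 1) - f (z 0))|
          ≤ M * ∑ j : Fin d, (if (j:ℕ) < n then |(x j : ℝ) - a j| else 0) := by
      intro n
      induction n with
      | zero => intro _; simp [hM0]
      | succ n ih =>
        intro hn1
        have hn : n < d := hn1
        have step : |(f (z (n+1) + Pi.single k 1) - f (z (n+1)))
            - (f (z n + Pi.single k 1) - f (z n))|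
            ≤ M * |(x ⟨n, hn⟩ : ℝ) - a ⟨n, hn⟩| := by
          set G : ℕ → ℝ := fun t =>
            f (Function.update (z n) ⟨n, hn⟩ t + Pi.single k 1)
              - f (Function.update (z n) ⟨n, hn⟩ t) with hG
          have hstep : ∀ t, |G (t+1) - G t| ≤ M := by
            intro t
            have h := hM ⟨n, hn⟩ k (Function.update (z n) ⟨n, hn⟩ t)
            simp only at h
            rw [upd_add_single] at h
            simpa only [hG] using h
          have key := lip G M hstep (a ⟨n, hn⟩) (x ⟨n, hn⟩)
          have e1 : G (x ⟨n, hn⟩) = f (z (n+1) + Pi.single k 1) - f (z (n+1)) := by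
            simp only [hG]
            rw [← hzs n hn]
          have e2 : G (a ⟨n, hn⟩) = f (z n + Pi.single k 1) - f (z n) := by
            simp only [hG]
            have h1 : z n ⟨n, hn⟩ = a ⟨n, hn⟩ := hzkk n hn
            conv_lhs => rw [← h1]
            rw [Function.update_eq_self]
          rw [e1, e2] at key
          exact key
        have split : (∑ j : Fin d, (if (j:ℕ) < n+1 then |(x j : ℝ) - a j| else 0))
            = (∑ j : Fin d, (if (j:ℕ) < n then |(x j : ℝ) - a j| else 0))
              + |(x ⟨n, hn⟩ : ℝ) - a ⟨n, hn⟩| := by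
          have pt : ∀ j : Fin d, (if (j:ℕ) < n+1 then |(x j : ℝ) - a j| else 0)
              = (if (j:ℕ) < n then |(x j : ℝ) - a j| else 0)
                + (if j = ⟨n, hn⟩ then |(x j : ℝ) - a j| else 0) := by
            intro j
            rcases eq_or_ne j ⟨n, hn⟩ with rfl | hj
            · simp
            · have hv : (j:ℕ) ≠ n := fun hc => hj (Fin.ext hc)
              have hiff : ((j:ℕ) < n + 1) ↔ ((j:ℕ) < n) := by omega
              simp only [hiff, if_neg hj, add_zero]
          rw [Finset.sum_congr rfl fun j _ => pt j, Finset.sum_add_distrib,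
            Finset.sum_ite_eq' Finset.univ (⟨n, hn⟩ : Fin d)
              (fun j => |(x j : ℝ) - a j|)]
          simp
        calc |(f (z (n+1) + Pi.single k 1) - f (z (n+1)))
            - (f (z 0 + Pi.single k 1) - f (z 0))|
            ≤ |(f (z (n+1) + Pi.single k 1) - f (z (n+1)))
                - (f (z n + Pi.single k 1) - f (z n))|
              + |(f (z n + Pi.single k 1) - f (z n))
                - (f (z 0 + Pi.single k 1) - f (z 0))| := by
              apply abs_sub_le
          _ ≤ M * |(x ⟨n, hn⟩ : ℝ) - a ⟨n, hn⟩|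
              + M * ∑ j : Fin d, (if (j:ℕ) < n then |(x j : ℝ) - a j| else 0) :=
              add_le_add step (ih (le_of_lt hn1))
          _ = M * ∑ j : Fin d, (if (j:ℕ) < n+1 then |(x j : ℝ) - a j| else 0) := by
              rw [split]; ring
    have := claim ↑k k.isLt.le
    rwa [hz0] at this
  -- telescoping identity
  have ht : ∑ k : Fin d, (f (z (↑k+1)) - f (z ↑k)) = f x - f a := by
    rw [Fin.sum_univ_eq_sum_range (fun m => f (z (m+1)) - f (z m)) d,
      Finset.sum_range_sub (fun m => f (z m)) d, hz0, hzd]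
  have hrew : f x - f a
        - ∑ i : Fin d, (f (a + Pi.single i 1) - f a) * ((x i : ℝ) - a i)
      = ∑ k : Fin d, (f (z (↑k+1)) - f (z ↑k)
          - (f (a + Pi.single k 1) - f a) * ((x k : ℝ) - a k)) := by
    rw [Finset.sum_sub_distrib, ht]
  rw [hrew]
  -- pointwise bound
  have hbound : ∀ k : Fin d,
      |f (z (↑k+1)) - f (z ↑k) - (f (a + Pi.single k 1) - f a) * ((x k : ℝ) - a k)|
        ≤ 1/2 * M * (|(x k:ℝ) - a k| * |(x k:ℝ) - a k - 1|)
          + M * ∑ j : Fin d,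
              (if (j:ℕ) < (k:ℕ) then |(x j:ℝ) - a j| * |(x k:ℝ) - a k| else 0) := by
    intro k
    have h2 : |(f (z ↑k + Pi.single k 1) - f (z ↑k)) - (f (a + Pi.single k 1) - f a)|
          * |(x k:ℝ) - a k|
        ≤ (M * ∑ j : Fin d, (if (j:ℕ) < (k:ℕ) then |(x j:ℝ) - a j| else 0))
          * |(x k:ℝ) - a k| :=
      mul_le_mul_of_nonneg_right (estB k) (abs_nonneg _)
    have e : (M * ∑ j : Fin d, (if (j:ℕ) < (k:ℕ) then |(x j:ℝ) - a j| else 0))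
          * |(x k:ℝ) - a k|
        = M * ∑ j : Fin d,
            (if (j:ℕ) < (k:ℕ) then |(x j:ℝ) - a j| * |(x k:ℝ) - a k| else 0) := by
      rw [mul_assoc, Finset.sum_mul]
      congr 1
      refine Finset.sum_congr rfl fun j _ => ?_
      rw [ite_mul, zero_mul]
    rw [e] at h2
    have hsplit : f (z (↑k+1)) - f (z ↑k)
          - (f (a + Pi.single k 1) - f a) * ((x k : ℝ) - a k)
        = (f (z (↑k+1)) - f (z ↑k)
            - (f (z ↑k + Pi.single k 1) - f (z ↑k)) * ((x k : ℝ) - a k))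
          + ((f (z ↑k + Pi.single k 1) - f (z ↑k))
              - (f (a + Pi.single k 1) - f a)) * ((x k : ℝ) - a k) := by ring
    calc |f (z (↑k+1)) - f (z ↑k)
          - (f (a + Pi.single k 1) - f a) * ((x k : ℝ) - a k)|
        ≤ |f (z (↑k+1)) - f (z ↑k)
            - (f (z ↑k + Pi.single k 1) - f (z ↑k)) * ((x k : ℝ) - a k)|
          + |((f (z ↑k + Pi.single k 1) - f (z ↑k))
              - (f (a + Pi.single k 1) - f a)) * ((x k : ℝ) - a k)| := by
          rw [hsplit]; exact abs_add_le _ _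
      _ ≤ 1/2 * M * (|(x k:ℝ) - a k| * |(x k:ℝ) - a k - 1|)
          + M * ∑ j : Fin d,
              (if (j:ℕ) < (k:ℕ) then |(x j:ℝ) - a j| * |(x k:ℝ) - a k| else 0) := by
          refine add_le_add (estA k) ?_
          rw [abs_mul]
          exact h2
  -- symmetrization of the off-diagonal sum
  have sym : (∑ i : Fin d, ∑ j : Fin d,
        if i = j then (0:ℝ) else |(x i:ℝ) - a i| * |(x j:ℝ) - a j|)
      = 2 * ∑ k : Fin d, ∑ j : Fin d,
          (if (j:ℕ) < (k:ℕ) then |(x j:ℝ) - a j| * |(x k:ℝ) - a k| else 0) := by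
    have pt : ∀ i j : Fin d,
        (if i = j then (0:ℝ) else |(x i:ℝ) - a i| * |(x j:ℝ) - a j|)
          = (if (j:ℕ) < (i:ℕ) then |(x j:ℝ) - a j| * |(x i:ℝ) - a i| else 0)
            + (if (i:ℕ) < (j:ℕ) then |(x i:ℝ) - a i| * |(x j:ℝ) - a j| else 0) := by
      intro i j
      rcases lt_trichotomy (i:ℕ) (j:ℕ) with h | h | h
      · rw [if_neg (fun hc => absurd (congrArg Fin.val hc) (by omega)),
          if_neg (by omega), if_pos h, zero_add]
      · rw [if_pos (Fin.ext h), if_neg (by omega), if_neg (by omega), add_zero]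
      · rw [if_neg (fun hc => absurd (congrArg Fin.val hc) (by omega)),
          if_pos h, if_neg (by omega), add_zero]
        exact mul_comm _ _
    have hAB : (∑ i : Fin d, ∑ j : Fin d,
          if i = j then (0:ℝ) else |(x i:ℝ) - a i| * |(x j:ℝ) - a j|)
        = (∑ i : Fin d, ∑ j : Fin d,
            (if (j:ℕ) < (i:ℕ) then |(x j:ℝ) - a j| * |(x i:ℝ) - a i| else 0))
          + ∑ i : Fin d, ∑ j : Fin d,
            (if (i:ℕ) < (j:ℕ) then |(x i:ℝ) - a i| * |(x j:ℝ) - a j| else 0) := by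
      rw [← Finset.sum_add_distrib]
      refine Finset.sum_congr rfl fun i _ => ?_
      rw [← Finset.sum_add_distrib]
      exact Finset.sum_congr rfl fun j _ => pt i j
    have hB : (∑ i : Fin d, ∑ j : Fin d,
          (if (i:ℕ) < (j:ℕ) then |(x i:ℝ) - a i| * |(x j:ℝ) - a j| else 0))
        = ∑ i : Fin d, ∑ j : Fin d,
            (if (j:ℕ) < (i:ℕ) then |(x j:ℝ) - a j| * |(x i:ℝ) - a i| else 0) :=
      Finset.sum_comm
    rw [hAB, hB]; ring
  calc |∑ k : Fin d, (f (z (↑k+1)) - f (z ↑k)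
          - (f (a + Pi.single k 1) - f a) * ((x k : ℝ) - a k))|
      ≤ ∑ k : Fin d, |f (z (↑k+1)) - f (z ↑k)
          - (f (a + Pi.single k 1) - f a) * ((x k : ℝ) - a k)| :=
        Finset.abs_sum_le_sum_abs _ _
    _ ≤ ∑ k : Fin d, (1/2 * M * (|(x k:ℝ) - a k| * |(x k:ℝ) - a k - 1|)
          + M * ∑ j : Fin d,
              (if (j:ℕ) < (k:ℕ) then |(x j:ℝ) - a j| * |(x k:ℝ) - a k| else 0)) :=
        Finset.sum_le_sum fun k _ => hbound k
    _ = (1 / 2) * M *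
        ((∑ i : Fin d, |(x i : ℝ) - (a i : ℝ)| * |(x i : ℝ) - (a i : ℝ) - 1|)
          + ∑ i : Fin d, ∑ j : Fin d,
              if i = j then 0 else |(x i : ℝ) - (a i : ℝ)| * |(x j : ℝ) - (a j : ℝ)|) := by
        rw [Finset.sum_add_distrib, ← Finset.mul_sum, ← Finset.mul_sum, sym]
        ring
end

section
/- With b_{n,l} = Σ_{p=0}^∞ e^{-n} (n^p/p!) · C(min(n,p), l)·C(n,l)^{-1}, one has lim_{n→∞} b_{n,l} = 1 for every fixed integer l ≥ 1. -/
open Filter NNReal Finset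

noncomputable def ppmf (n p : ℕ) : ℝ := Real.exp (-(n : ℝ)) * (n : ℝ) ^ p / (Nat.factorial p : ℝ)

lemma ppmf_nonneg (n p : ℕ) : 0 ≤ ppmf n p := by
  unfold ppmf; positivity

lemma hasSum_ppmf (n : ℕ) : HasSum (fun p => ppmf n p) 1 := by
  have h := ProbabilityTheory.poissonPMFRealSum (n : ℝ≥0)
  simpa [ProbabilityTheory.poissonPMFReal, ppmf] using h

lemma ppmf_succ (n p : ℕ) : ppmf n (p + 1) * ((p : ℝ) + 1) = (n : ℝ) * ppmf n p := by
  unfold ppmf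
  rw [Nat.factorial_succ]
  push_cast
  have h2 : (Nat.factorial p : ℝ) ≠ 0 := by positivity
  field_simp
  ring

lemma hasSum_ppmf_mul (n : ℕ) : HasSum (fun p : ℕ => ppmf n p * p) (n : ℝ) := by
  have h : HasSum (fun p : ℕ => (fun q : ℕ => ppmf n q * q) (p + 1)) ((n : ℝ) * 1) := by
    refine ((hasSum_ppmf n).mul_left (n : ℝ)).congr_fun fun p => ?_
    push_cast
    exact ppmf_succ n p
  have h2 := (hasSum_nat_add_iff (f := fun q : ℕ => ppmf n q * q) 1).mp h
  simpa using h2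

lemma hasSum_ppmf_mul2 (n : ℕ) :
    HasSum (fun p : ℕ => ppmf n p * p * ((p : ℝ) - 1)) ((n : ℝ) ^ 2) := by
  have h : HasSum (fun p : ℕ => (fun q : ℕ => ppmf n q * q * ((q : ℝ) - 1)) (p + 2))
      ((n : ℝ) ^ 2 * 1) := by
    refine ((hasSum_ppmf n).mul_left ((n : ℝ) ^ 2)).congr_fun fun p => ?_
    push_cast
    have e1 : ppmf n (p + 2) * ((p : ℝ) + 2) = (n : ℝ) * ppmf n (p + 1) := by
      have := ppmf_succ n (p + 1); push_cast at this; convert this using 2 <;> ring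
    calc ppmf n (p + 2) * ((p : ℝ) + 2) * ((p : ℝ) + 2 - 1)
        = (n : ℝ) * (ppmf n (p + 1) * ((p : ℝ) + 1)) := by rw [e1]; ring
      _ = (n : ℝ) ^ 2 * ppmf n p := by rw [ppmf_succ]; ring
  have h2 := (hasSum_nat_add_iff (f := fun q : ℕ => ppmf n q * q * ((q : ℝ) - 1)) 2).mp h
  simpa [Finset.sum_range_succ] using h2

/-- variance identity -/
lemma hasSum_ppmf_sq (n : ℕ) :
    HasSum (fun p : ℕ => ppmf n p * ((p : ℝ) - n) ^ 2) (n : ℝ) := by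
  have h1 := hasSum_ppmf_mul2 n
  have h2 := (hasSum_ppmf_mul n).mul_left (1 - 2 * (n : ℝ))
  have h3 := (hasSum_ppmf n).mul_left ((n : ℝ) ^ 2)
  have h := (h1.add h2).add h3
  have e : (fun p : ℕ => ppmf n p * p * ((p : ℝ) - 1) +
      (1 - 2 * (n : ℝ)) * (ppmf n p * p) + (n : ℝ) ^ 2 * ppmf n p)
      = fun p : ℕ => ppmf n p * ((p : ℝ) - n) ^ 2 := by
    funext p; ring
  rw [e] at h
  convert h using 1
  ring

lemma cheby (n t : ℕ) (ht : 1 ≤ t) :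
    ∑ p ∈ range (n - t), ppmf n p ≤ (n : ℝ) / (t : ℝ) ^ 2 := by
  have htpos : (0 : ℝ) < (t : ℝ) ^ 2 := by positivity
  rw [div_eq_inv_mul, ← mul_le_mul_iff_right₀ htpos, ← mul_assoc, mul_inv_cancel₀ htpos.ne', one_mul]
  calc (t : ℝ) ^ 2 * ∑ p ∈ range (n - t), ppmf n p
      = ∑ p ∈ range (n - t), (t : ℝ) ^ 2 * ppmf n p := by rw [Finset.mul_sum]
    _ ≤ ∑ p ∈ range (n - t), ppmf n p * ((p : ℝ) - n) ^ 2 := by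
        apply Finset.sum_le_sum
        intro p hp
        rw [Finset.mem_range] at hp
        have hpt : p + t ≤ n := by omega
        have h1 : (t : ℝ) ≤ (n : ℝ) - p := by
          have : (p : ℝ) + t ≤ n := by exact_mod_cast hpt
          linarith
        have h2 : (t : ℝ) ^ 2 ≤ ((p : ℝ) - n) ^ 2 := by
          have : ((p : ℝ) - n) ^ 2 = ((n : ℝ) - p) ^ 2 := by ring
          rw [this]
          exact pow_le_pow_left₀ (by positivity) h1 2
        nlinarith [ppmf_nonneg n p]
    _ ≤ (n : ℝ) := by
        refine Summable.sum_le_tsum _ (fun p _ => mul_nonneg (ppmf_nonneg n p) (sq_nonneg _)) ?_ |>.trans_eq (hasSum_ppmf_sq n).tsum_eq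
        exact (hasSum_ppmf_sq n).summable

lemma term_nonneg (l n p : ℕ) :
    0 ≤ ppmf n p * ((Nat.choose (min n p) l : ℝ) / (Nat.choose n l : ℝ)) := by
  have := ppmf_nonneg n p; positivity

lemma term_le (l n p : ℕ) :
    ppmf n p * ((Nat.choose (min n p) l : ℝ) / (Nat.choose n l : ℝ)) ≤ ppmf n p := by
  have hp := ppmf_nonneg n p
  rcases eq_or_ne (Nat.choose n l) 0 with h | h
  · simp [h, hp]
  · have hpos : (0 : ℝ) < (Nat.choose n l : ℝ) := by
      exact_mod_cast Nat.pos_of_ne_zero h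
    have hr : (Nat.choose (min n p) l : ℝ) / (Nat.choose n l : ℝ) ≤ 1 := by
      rw [div_le_one hpos]
      exact_mod_cast Nat.choose_le_choose l (min_le_left n p)
    nlinarith

lemma summable_term (l n : ℕ) :
    Summable (fun p : ℕ => ppmf n p *
      ((Nat.choose (min n p) l : ℝ) / (Nat.choose n l : ℝ))) :=
  Summable.of_nonneg_of_le (term_nonneg l n) (term_le l n) (hasSum_ppmf n).summable

lemma b_le_one (l n : ℕ) :
    ∑' p : ℕ, ppmf n p * ((Nat.choose (min n p) l : ℝ) / (Nat.choose n l : ℝ)) ≤ 1 := by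
  refine (Summable.tsum_le_tsum (term_le l n) (summable_term l n)
    (hasSum_ppmf n).summable).trans_eq (hasSum_ppmf n).tsum_eq

lemma b_lower (l n t : ℕ) (hln : l ≤ n) :
    (Nat.choose (n - t) l : ℝ) / (Nat.choose n l : ℝ) *
      (1 - ∑ p ∈ range (n - t), ppmf n p) ≤
    ∑' p : ℕ, ppmf n p * ((Nat.choose (min n p) l : ℝ) / (Nat.choose n l : ℝ)) := by
  set m := n - t with hm
  set c : ℝ := (Nat.choose m l : ℝ) / (Nat.choose n l : ℝ) with hc
  have hc0 : 0 ≤ c := by positivity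
  have hnl : (0 : ℝ) < (Nat.choose n l : ℝ) := by exact_mod_cast Nat.choose_pos hln
  set g : ℕ → ℝ := fun p => if p < m then 0 else ppmf n p * c with hg
  have hgle : ∀ p, g p ≤ ppmf n p *
      ((Nat.choose (min n p) l : ℝ) / (Nat.choose n l : ℝ)) := by
    intro p
    by_cases hp : p < m
    · simp only [hg, if_pos hp]
      exact term_nonneg l n p
    · simp only [hg, if_neg hp]
      push_neg at hp
      have hmin : m ≤ min n p := le_min (Nat.sub_le n t) hp
      have : (Nat.choose m l : ℝ) ≤ (Nat.choose (min n p) l : ℝ) := by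
        exact_mod_cast Nat.choose_le_choose l hmin
      have hcle : c ≤ (Nat.choose (min n p) l : ℝ) / (Nat.choose n l : ℝ) := by
        rw [hc]; gcongr
      exact mul_le_mul_of_nonneg_left hcle (ppmf_nonneg n p)
  have hsum1 : Summable (fun p => ppmf n p * c) := (hasSum_ppmf n).summable.mul_right c
  have hfin : ∀ p ∉ range m, (if p < m then ppmf n p * c else 0) = 0 := by
    intro p hp; rw [Finset.mem_range] at hp; simp [hp]
  have hsum2 : Summable (fun p => if p < m then ppmf n p * c else 0) :=
    summable_of_ne_finset_zero (s := range m) hfin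
  have hgeq : g = fun p => ppmf n p * c - (if p < m then ppmf n p * c else 0) := by
    funext p; by_cases hp : p < m <;> simp [hg, hp]
  have hsumg : Summable g := by rw [hgeq]; exact hsum1.sub hsum2
  have htsumg : ∑' p, g p = c - (∑ p ∈ range m, ppmf n p) * c := by
    rw [hgeq, Summable.tsum_sub hsum1 hsum2, tsum_eq_sum hfin]
    have h1 : ∑ p ∈ range m, (if p < m then ppmf n p * c else 0)
        = ∑ p ∈ range m, ppmf n p * c := by
      apply Finset.sum_congr rfl; intro p hp; rw [Finset.mem_range] at hp; simp [hp]
    have h2 : (∑' p, ppmf n p * c) = c := by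
      rw [((hasSum_ppmf n).mul_right c).tsum_eq, one_mul]
    rw [h1, ← Finset.sum_mul, h2]
  calc c * (1 - ∑ p ∈ range m, ppmf n p) = ∑' p, g p := by rw [htsumg]; ring
    _ ≤ _ := Summable.tsum_le_tsum hgle hsumg (summable_term l n)

lemma choose_ratio_ge (l m n : ℕ) (hln : l ≤ n) (h1 : 1 ≤ n) :
    ((m + 1 - l : ℕ) : ℝ) ^ l / (n : ℝ) ^ l ≤
      (Nat.choose m l : ℝ) / (Nat.choose n l : ℝ) := by
  have hnl : (0 : ℝ) < (Nat.choose n l : ℝ) := by exact_mod_cast Nat.choose_pos hln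
  have hfac : (0 : ℝ) < (Nat.factorial l : ℝ) := by exact_mod_cast Nat.factorial_pos l
  have hn0 : (0 : ℝ) < (n : ℝ) := by exact_mod_cast h1
  have key : ((m + 1 - l : ℕ) : ℝ) ^ l / (Nat.factorial l : ℝ) /
      ((n : ℝ) ^ l / (Nat.factorial l : ℝ)) ≤
      (Nat.choose m l : ℝ) / (Nat.choose n l : ℝ) := by
    refine div_le_div₀ (by positivity) ?_ hnl (Nat.choose_le_pow_div l n)
    have := Nat.pow_le_choose (α := ℝ) l m
    exact_mod_cast this
  calc ((m + 1 - l : ℕ) : ℝ) ^ l / (n : ℝ) ^ l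
      = ((m + 1 - l : ℕ) : ℝ) ^ l / (Nat.factorial l : ℝ) /
        ((n : ℝ) ^ l / (Nat.factorial l : ℝ)) := by
        field_simp
    _ ≤ _ := key

/-- For each fixed `l ≥ 1`, the Poisson expectation
`b_{n,l} = Σ_{p≥0} e^{-n} (n^p/p!) C(min(n,p), l)/C(n,l)` tends to `1` as `n → ∞`. -/
theorem poisson_binomial_ratio_tendsto_one (l : ℕ) (hl : 1 ≤ l) :
    Tendsto
      (fun n : ℕ =>
        ∑' p : ℕ, Real.exp (-(n : ℝ)) * (n : ℝ) ^ p / (Nat.factorial p : ℝ) *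
          ((Nat.choose (min n p) l : ℝ) / (Nat.choose n l : ℝ)))
      atTop (nhds 1) := by
  have heq : (fun n : ℕ =>
        ∑' p : ℕ, Real.exp (-(n : ℝ)) * (n : ℝ) ^ p / (Nat.factorial p : ℝ) *
          ((Nat.choose (min n p) l : ℝ) / (Nat.choose n l : ℝ)))
      = fun n : ℕ => ∑' p : ℕ, ppmf n p *
          ((Nat.choose (min n p) l : ℝ) / (Nat.choose n l : ℝ)) := rfl
  rw [heq, tendsto_order]
  constructor
  · intro a ha
    set a' : ℝ := max a 0 with ha'def
    have haa' : a ≤ a' := le_max_left a 0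
    have ha'0 : 0 ≤ a' := le_max_right a 0
    have ha'1 : a' < 1 := max_lt ha one_pos
    have hlpos : (0 : ℝ) < l := by exact_mod_cast hl
    have hl1 : (1 : ℝ) ≤ l := by exact_mod_cast hl
    set δ : ℝ := (1 - a') / (8 * l) with hδdef
    have hδpos : 0 < δ := by
      apply div_pos (by linarith) (by positivity)
    have hδl : δ * l = (1 - a') / 8 := by
      field_simp [hδdef]
      rw [hδdef, div_mul_eq_mul_div, div_mul_eq_mul_div, div_eq_iff (by linarith : (0:ℝ) < 8 * l).ne']; ring
    have hδle : δ ≤ 1 / 8 := by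
      rw [hδdef, div_le_div_iff₀ (by positivity) (by norm_num)]
      nlinarith
    have hgt : a < 1 - 2 * δ * l := by
      have : 2 * δ * l = (1 - a') / 4 := by rw [mul_assoc, hδl]; ring
      rw [this]; linarith
    clear_value δ a'
    -- auxiliary limits
    have hu : Tendsto (fun n : ℕ => 1 / (δ ^ 2 * n)) atTop (nhds 0) := by
      simp only [one_div]
      exact (tendsto_natCast_atTop_atTop.const_mul_atTop (by positivity : (0:ℝ) < δ ^ 2)).inv_tendsto_atTop
    have hlim : Tendsto (fun n : ℕ => (1 - 2 * δ * l) * (1 - 1 / (δ ^ 2 * n)))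
        atTop (nhds (1 - 2 * δ * l)) := by
      have := (tendsto_const_nhds (x := (1:ℝ)) (f := atTop (α := ℕ))).sub hu
      have h2 := this.const_mul (1 - 2 * δ * l)
      simpa using h2
    have hδn : Tendsto (fun n : ℕ => δ * n) atTop atTop :=
      tendsto_natCast_atTop_atTop.const_mul_atTop hδpos
    filter_upwards [eventually_ge_atTop 2, hδn.eventually_ge_atTop (l : ℝ),
      hlim.eventually (eventually_gt_nhds hgt),
      hu.eventually (eventually_le_nhds (by norm_num : (0:ℝ) < 1/2))] with n hn2 hln hA hX
    -- setup
    have hn1 : (1 : ℝ) ≤ n := by exact_mod_cast Nat.one_le_of_lt hn2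
    have hnpos : (0 : ℝ) < n := by linarith
    set t : ℕ := ⌈δ * n⌉₊ with htdef
    have htlb : δ * n ≤ t := Nat.le_ceil _
    have htub : (t : ℝ) ≤ δ * n + 1 := (Nat.ceil_lt_add_one (by positivity)).le
    have ht1 : 1 ≤ t := Nat.one_le_ceil_iff.mpr (by positivity)
    have hprod : δ * (n:ℝ) ≤ 1/8 * n := mul_le_mul_of_nonneg_right hδle hnpos.le
    have htn : t ≤ n := Nat.ceil_le.mpr (by linarith)
    set m : ℕ := n - t with hmdef
    have hmcast : (m : ℝ) = (n : ℝ) - t := by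
      rw [hmdef]; exact Nat.cast_sub htn
    clear_value m t
    have hlen : l ≤ n := by
      have : (l : ℝ) ≤ (n : ℝ) := by linarith
      exact_mod_cast this
    have hlm1 : l ≤ m + 1 := by
      have : (l : ℝ) ≤ (m : ℝ) + 1 := by rw [hmcast]; linarith
      exact_mod_cast this
    have hm1l : ((m + 1 - l : ℕ) : ℝ) = (m : ℝ) + 1 - l := by
      rw [Nat.cast_sub hlm1]; push_cast; ring
    have key1 : (1 - 2 * δ) * n ≤ ((m + 1 - l : ℕ) : ℝ) := by
      rw [hm1l, hmcast]; linarith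
    have h2δ : 0 ≤ 1 - 2 * δ := by linarith
    have hc1 : (1 - 2 * δ) ^ l ≤ ((m + 1 - l : ℕ) : ℝ) ^ l / (n : ℝ) ^ l := by
      have e : (1 - 2 * δ) ^ l = ((1 - 2 * δ) * n) ^ l / (n : ℝ) ^ l := by
        rw [mul_pow]; field_simp
      rw [e]
      gcongr
    have hc2 : (1 - 2 * δ) ^ l ≤ (Nat.choose m l : ℝ) / (Nat.choose n l : ℝ) :=
      hc1.trans (choose_ratio_ge l m n hlen (by exact_mod_cast hn1))
    have bern : 1 - 2 * δ * l ≤ (1 - 2 * δ) ^ l := by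
      have := one_add_mul_le_pow (a := -(2*δ)) (by linarith) l
      calc 1 - 2 * δ * l = 1 + l * (-(2*δ)) := by ring
        _ ≤ (1 + -(2*δ)) ^ l := this
        _ = (1 - 2*δ) ^ l := by ring_nf
    have cheb : ∑ p ∈ range m, ppmf n p ≤ (n : ℝ) / (t : ℝ) ^ 2 := by
      have := cheby n t ht1; rwa [← hmdef] at this
    have htpos : (0 : ℝ) < t := by
      have : (1:ℝ) ≤ t := by exact_mod_cast ht1
      linarith
    have hnt2 : (n : ℝ) / (t : ℝ) ^ 2 ≤ 1 / (δ ^ 2 * n) := by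
      rw [div_le_div_iff₀ (by positivity) (by positivity)]
      have hsq : (δ * n) ^ 2 ≤ (t:ℝ) ^ 2 := pow_le_pow_left₀ (by positivity) htlb 2
      nlinarith [hsq]
    have hX' : (0:ℝ) ≤ 1 - 1 / (δ ^ 2 * n) := by linarith
    have hc0 : (0:ℝ) ≤ (Nat.choose m l : ℝ) / (Nat.choose n l : ℝ) := by positivity
    have lower := b_lower l n t hlen
    rw [← hmdef] at lower
    calc a < (1 - 2 * δ * l) * (1 - 1 / (δ ^ 2 * n)) := hA
      _ ≤ (1 - 2 * δ) ^ l * (1 - 1 / (δ ^ 2 * n)) :=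
          mul_le_mul_of_nonneg_right bern hX'
      _ ≤ (Nat.choose m l : ℝ) / (Nat.choose n l : ℝ) * (1 - 1 / (δ ^ 2 * n)) :=
          mul_le_mul_of_nonneg_right hc2 hX'
      _ ≤ (Nat.choose m l : ℝ) / (Nat.choose n l : ℝ) *
            (1 - ∑ p ∈ range m, ppmf n p) := by
          apply mul_le_mul_of_nonneg_left _ hc0
          have := cheb.trans hnt2
          linarith
      _ ≤ _ := lower
  · intro a ha
    filter_upwards [] with n
    exact lt_of_le_of_lt (b_le_one l n) ha
end
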